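/- For the constrained binary interaction rule v' = v + (νΔt/(ν+Δt²))·I(v,w;ρ) + (Δt²/(ν+Δt²))·(v_d−v), if 0 < Δt ≤ 1, ν > 0, v, w ∈ [0,1], v_d ∈ [0,1], then v' ∈ [0,1]. -/

import Mathlib

noncomputable def P (γ ρ : ℝ) : ℝ := 1 - ρ ^ γ

noncomputable def I (γ Δv ρ v w : ℝ) : ℝ :=
  if v < w then P γ ρ * (min (v + Δv) 1 - v)
  else if w < v then (1 - P γ ρ) * (P γ ρ * w - v)
  else 0

/-!
Every term of the update is a convex combination of points of `[0,1]`. The interaction moves `v`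
a fraction `P ∈ [0,1]` of the way towards `min (v + Δv) 1` (acceleration) or a fraction `1 - P`
of the way towards `P w` (braking), so `v + I ∈ [0,1]`. The update is then
`(1 - a - b) v + a (v + I) + b v_d` with weights `a = νΔt/(ν+Δt²)`, `b = Δt²/(ν+Δt²)`, and
`a + b ≤ 1` is exactly `Δt ≤ 1`.
-/

open Set

theorem Convex.add_smul_add_smul_mem {𝕜 E : Type*} [Field 𝕜] [LinearOrder 𝕜] [IsStrictOrderedRing 𝕜]
    [AddCommGroup E] [Module 𝕜 E] {s : Set E} (hs : Convex 𝕜 s) {x y z : E} (hx : x ∈ s)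
    (hy : x + y ∈ s) (hz : x + z ∈ s) {a b : 𝕜} (ha : 0 ≤ a) (hb : 0 ≤ b) (hab : a + b ≤ 1) :
    x + a • y + b • z ∈ s := by
  have hcombo : x + a • y + b • z = ∑ i, ![1 - a - b, a, b] i • ![x, x + y, x + z] i := by
    simp only [Fin.sum_univ_three, Matrix.cons_val]
    match_scalars <;> ring
  rw [hcombo]
  refine hs.sum_mem (fun i _ => ?_) (by simp only [Fin.sum_univ_three, Matrix.cons_val]; ring) (fun i _ => ?_)
  · fin_cases i <;> simp only [Fin.reduceFinMk, Matrix.cons_val] <;> linarith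
  · fin_cases i <;> simpa

theorem P_mem_Icc {γ ρ : ℝ} (hγ : 0 ≤ γ) (hρ : ρ ∈ Icc (0 : ℝ) 1) : P γ ρ ∈ Icc (0 : ℝ) 1 :=
  ⟨sub_nonneg.2 (Real.rpow_le_one hρ.1 hρ.2 hγ),
    sub_le_self _ (Real.rpow_nonneg hρ.1 γ)⟩

theorem add_I_mem_Icc {γ Δv ρ v w : ℝ} (hγ : 0 ≤ γ) (hΔv : 0 ≤ Δv) (hρ : ρ ∈ Icc (0 : ℝ) 1)
    (hv : v ∈ Icc (0 : ℝ) 1) (hw : w ∈ Icc (0 : ℝ) 1) : v + I γ Δv ρ v w ∈ Icc (0 : ℝ) 1 := by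
  have hP := P_mem_Icc hγ hρ
  unfold I
  split_ifs
  · have htarget : min (v + Δv) 1 ∈ Icc (0 : ℝ) 1 :=
      ⟨le_min (by linarith [hv.1]) zero_le_one, min_le_right _ _⟩
    exact (convex_Icc 0 1).add_smul_sub_mem hv htarget hP
  · have htarget : P γ ρ * w ∈ Icc (0 : ℝ) 1 :=
      ⟨mul_nonneg hP.1 hw.1, mul_le_one₀ hP.2 hw.1 hw.2⟩
    exact (convex_Icc 0 1).add_smul_sub_mem hv htarget ⟨sub_nonneg.2 hP.2, sub_le_self _ hP.1⟩
  · simpa using hv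

theorem relaxation_weights_sum_le_one {ν Δt : ℝ} (hΔt : 0 < Δt) (hΔt1 : Δt ≤ 1) (hν : 0 < ν) :
    ν * Δt / (ν + Δt ^ 2) + Δt ^ 2 / (ν + Δt ^ 2) ≤ 1 := by
  have hden : 0 < ν + Δt ^ 2 := by positivity
  rw [← add_div, div_le_one hden]
  nlinarith

theorem stmt3 (γ Δv ρ v w vd Δt ν : ℝ) (hγ : 0 < γ) (hΔv : 0 < Δv)
    (hρ : ρ ∈ Set.Icc (0:ℝ) 1) (hv : v ∈ Set.Icc (0:ℝ) 1)
    (hw : w ∈ Set.Icc (0:ℝ) 1) (hvd : vd ∈ Set.Icc (0:ℝ) 1)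
    (hΔt : 0 < Δt) (hΔt1 : Δt ≤ 1) (hν : 0 < ν) :
    v + (ν * Δt / (ν + Δt ^ 2)) * I γ Δv ρ v w + (Δt ^ 2 / (ν + Δt ^ 2)) * (vd - v)
      ∈ Set.Icc (0:ℝ) 1 := by
  have hinteraction := add_I_mem_Icc hγ.le hΔv.le hρ hv hw
  have hdesired : v + (vd - v) ∈ Icc (0 : ℝ) 1 := by simpa using hvd
  exact (convex_Icc 0 1).add_smul_add_smul_mem hv hinteraction hdesired (by positivity)
    (by positivity) (relaxation_weights_sum_le_one hΔt hΔt1 hν)
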